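/- Let V : ℝ → ℝ be continuously differentiable with V(0) < β₁ < β. Suppose that for every t, if V(t) = β₁ then V'(t) ≤ -ε/2 for some fixed ε > 0. Then V(t) ≤ β₁ for all t ≥ 0; in particular V(t) < β for all t ≥ 0. -/

import Mathlib

theorem stmt4 (V : ℝ → ℝ) (β β₁ ε : ℝ) (hV : ContDiff ℝ 1 V)
    (h0 : V 0 < β₁) (hβ : β₁ < β) (hε : 0 < ε)
    (hdec : ∀ t, V t = β₁ → deriv V t ≤ -ε / 2) :
    ∀ t ≥ (0:ℝ), V t ≤ β₁ ∧ V t < β := by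
  have hcont : Continuous V := hV.continuous
  have key : ∀ t ≥ (0:ℝ), V t ≤ β₁ := by
    intro t ht
    by_contra h
    push_neg at h
    set S : Set ℝ := Set.Icc 0 t ∩ V ⁻¹' Set.Iic β₁ with hSdef
    have hSclosed : IsClosed S := isClosed_Icc.inter (isClosed_Iic.preimage hcont)
    have h0S : (0:ℝ) ∈ S := ⟨⟨le_refl 0, ht⟩, le_of_lt h0⟩
    have hSne : S.Nonempty := ⟨0, h0S⟩
    have hSbdd : BddAbove S := ⟨t, fun x hx => hx.1.2⟩
    have hsmem : sSup S ∈ S := hSclosed.csSup_mem hSne hSbdd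
    set s := sSup S with hs
    have hVs : V s ≤ β₁ := hsmem.2
    have hst : s < t := by
      rcases lt_or_eq_of_le hsmem.1.2 with h' | h'
      · exact h'
      · rw [h'] at hVs; exact absurd hVs (not_le.mpr h)
    have hev : ∀ᶠ u in nhdsWithin s (Set.Ioi s), V u < β₁ := by
      rcases lt_or_eq_of_le hVs with hlt | heq
      · have h1 : ∀ᶠ u in nhds s, V u < β₁ :=
          (hcont.continuousAt).eventually_lt continuousAt_const hlt
        exact h1.filter_mono nhdsWithin_le_nhds
      · have hder : HasDerivAt V (deriv V s) s :=
          ((hV.differentiable one_ne_zero) s).hasDerivAt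
        have hdneg : deriv V s < 0 :=
          lt_of_le_of_lt (hdec s heq) (by linarith)
        have hslope : Filter.Tendsto (slope V s) (nhdsWithin s {s}ᶜ) (nhds (deriv V s)) :=
          hasDerivAt_iff_tendsto_slope.mp hder
        have hslope' : ∀ᶠ u in nhdsWithin s {s}ᶜ, slope V s u < 0 :=
          hslope.eventually_lt_const hdneg
        have hmono : ∀ᶠ u in nhdsWithin s (Set.Ioi s), slope V s u < 0 :=
          hslope'.filter_mono (nhdsWithin_mono s fun u hu => ne_of_gt hu)
        have hself : ∀ᶠ u in nhdsWithin s (Set.Ioi s), u ∈ Set.Ioi s :=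
          self_mem_nhdsWithin
        filter_upwards [hmono, hself] with u h1 h2
        have hus : 0 < u - s := sub_pos.mpr h2
        have : (V u - V s) / (u - s) < 0 := by
          simpa [slope_def_field, div_eq_iff] using h1
        have : V u - V s < 0 := by
          have := (div_neg_iff).mp this
          rcases this with ⟨h3, h4⟩ | ⟨h3, h4⟩
          · linarith
          · exact h3
        calc V u < V s := by linarith
          _ ≤ β₁ := hVs
    have hIoc : Set.Ioc s t ∈ nhdsWithin s (Set.Ioi s) :=
      Ioc_mem_nhdsGT_of_mem ⟨le_refl s, hst⟩
    have hev2 : ∀ᶠ u in nhdsWithin s (Set.Ioi s), u ∈ Set.Ioc s t :=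
      hIoc
    obtain ⟨u, hu1, hu2⟩ := (hev.and hev2).exists
    have huS : u ∈ S := ⟨⟨le_trans hsmem.1.1 (le_of_lt hu2.1), hu2.2⟩, le_of_lt hu1⟩
    have : u ≤ s := le_csSup hSbdd huS
    exact absurd hu2.1 (not_lt.mpr this)
  intro t ht
  exact ⟨key t ht, lt_of_le_of_lt (key t ht) hβ⟩
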